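/- arXiv:1303.3547 — 2 statements merged into one kernel-verified Lean document; each statement's English description precedes it below -/
import Mathlib

section
/- Let M ≥ 1 and 0 ≤ v < M be integers and let A be an M×M complex Toeplitz matrix, i.e., there is a function g : ℤ → ℂ with A_{i,j} = g(i − j) for all 0 ≤ i, j < M. Then J⁰(v)·A·(J⁰(v))^H + J¹(v)·A·(J¹(v))^H = A ⊙ Υ(v), where ⊙ is the entrywise (Hadamard) product. -/
open Matrix

/-- The shift matrix `J⁰(v)`: entry `(i,j)` is `1` iff `i < v` and `j = M - v + i`. -/
noncomputable def J0 (M v : ℕ) : Matrix (Fin M) (Fin M) ℂ :=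
  Matrix.of fun i j => if (i : ℕ) < v ∧ (j : ℕ) = M - v + (i : ℕ) then 1 else 0

/-- The shift matrix `J¹(v)`: entry `(i,j)` is `1` iff `v ≤ i` and `j = i - v`. -/
noncomputable def J1 (M v : ℕ) : Matrix (Fin M) (Fin M) ℂ :=
  Matrix.of fun i j => if v ≤ (i : ℕ) ∧ (j : ℕ) = (i : ℕ) - v then 1 else 0

/-- The masking matrix `Υ(v)`: block diagonal with an all-ones `v × v` block and an
all-ones `(M-v) × (M-v)` block. -/
noncomputable def Ups (M v : ℕ) : Matrix (Fin M) (Fin M) ℂ :=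
  Matrix.of fun i j =>
    if ((i : ℕ) < v ∧ (j : ℕ) < v) ∨ (v ≤ (i : ℕ) ∧ v ≤ (j : ℕ)) then 1 else 0

/-! `J⁰(v)` and `J¹(v)` are the matrices of the partial shifts `i ↦ i + (M - v)` (defined for
`i < v`) and `i ↦ i - v` (defined for `v ≤ i`) of `Fin M`. Conjugating `A` by the matrix of a
partial bijection `f` gives `A (f i) (f j)` where both are defined and `0` elsewhere; for a shift
and Toeplitz `A` this is `A i j`. The two domains give the two diagonal blocks of `Υ(v)`. -/

theorem PEquiv.toMatrix_mul_mul_conjTranspose_apply {m n α : Type*} [Fintype n] [DecidableEq m]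
    [DecidableEq n] [Semiring α] [StarRing α] (f : m ≃. n) (A : Matrix n n α) (i j : m) :
    ((f.toMatrix : Matrix m n α) * A * (f.toMatrix : Matrix m n α)ᴴ) i j =
      Option.casesOn (f i) 0 fun a => Option.casesOn (f j) 0 fun b => A a b := by
  have hsymm : (f.toMatrixᴴ : Matrix n m α) = f.symm.toMatrix := by
    ext a k
    simp [PEquiv.mem_iff_mem f, apply_ite star]
  rw [hsymm, PEquiv.mul_toMatrix_apply, PEquiv.symm_symm]
  rcases f j with - | b <;> rcases hi : f i with - | a <;> simp [PEquiv.toMatrix_mul_apply, hi]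

namespace Fin

def shiftPEquiv (M : ℕ) (d : ℤ) : Fin M ≃. Fin M where
  toFun i := if h : 0 ≤ (i : ℤ) + d ∧ (i : ℤ) + d < M then some ⟨((i : ℤ) + d).toNat, by omega⟩
    else none
  invFun j := if h : 0 ≤ (j : ℤ) - d ∧ (j : ℤ) - d < M then some ⟨((j : ℤ) - d).toNat, by omega⟩
    else none
  inv i j := by
    split_ifs <;> simp only [Option.some.injEq, Fin.ext_iff, iff_false, false_iff] <;> omega

variable {M : ℕ}

theorem shiftPEquiv_eq_some_iff {d : ℤ} {i a : Fin M} :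
    shiftPEquiv M d i = some a ↔ (a : ℤ) = i + d := by
  simp only [shiftPEquiv, PEquiv.coe_mk]
  split_ifs <;> simp only [Option.some.injEq, Fin.ext_iff, false_iff] <;> omega

theorem shiftPEquiv_isSome_iff {d : ℤ} {i : Fin M} :
    (shiftPEquiv M d i).isSome ↔ 0 ≤ (i : ℤ) + d ∧ (i : ℤ) + d < M := by
  simp only [shiftPEquiv, PEquiv.coe_mk]
  split_ifs with h <;> simp [h]

theorem shiftPEquiv_sub_isSome_iff {v : ℕ} (hv : v ≤ M) {i : Fin M} :
    (shiftPEquiv M (M - v) i).isSome ↔ (i : ℕ) < v := by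
  rw [shiftPEquiv_isSome_iff]
  omega

theorem shiftPEquiv_neg_isSome_iff {v : ℕ} {i : Fin M} :
    (shiftPEquiv M (-v) i).isSome ↔ v ≤ (i : ℕ) := by
  rw [shiftPEquiv_isSome_iff]
  omega

theorem toMatrix_shiftPEquiv_mul_mul_conjTranspose_apply_of_toeplitz {α : Type*} [Semiring α]
    [StarRing α] {A : Matrix (Fin M) (Fin M) α} {g : ℤ → α}
    (hA : ∀ i j : Fin M, A i j = g (i - j)) (d : ℤ) (i j : Fin M) :
    ((shiftPEquiv M d).toMatrix * A * (shiftPEquiv M d).toMatrixᴴ : Matrix (Fin M) (Fin M) α)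
      i j = if (shiftPEquiv M d i).isSome ∧ (shiftPEquiv M d j).isSome then A i j else 0 := by
  rw [PEquiv.toMatrix_mul_mul_conjTranspose_apply]
  rcases hi : shiftPEquiv M d i with - | a
  · simp
  rcases hj : shiftPEquiv M d j with - | b
  · simp
  simp only [Option.isSome_some, and_self, if_true]
  rw [shiftPEquiv_eq_some_iff] at hi hj
  rw [hA, hA, hi, hj, add_sub_add_right_eq_sub]

end Fin

theorem J0_eq_toMatrix_shiftPEquiv {M v : ℕ} (hv : v ≤ M) :
    J0 M v = (Fin.shiftPEquiv M (M - v)).toMatrix := by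
  ext i j
  simp only [J0, of_apply, PEquiv.toMatrix_apply, Option.mem_def, Fin.shiftPEquiv_eq_some_iff]
  exact if_congr (by omega) rfl rfl

theorem J1_eq_toMatrix_shiftPEquiv (M v : ℕ) :
    J1 M v = (Fin.shiftPEquiv M (-v)).toMatrix := by
  ext i j
  simp only [J1, of_apply, PEquiv.toMatrix_apply, Option.mem_def, Fin.shiftPEquiv_eq_some_iff]
  exact if_congr (by omega) rfl rfl

theorem stmt2_general (M : ℕ) (v : ℕ) (hv : v < M)
    (A : Matrix (Fin M) (Fin M) ℂ) (g : ℤ → ℂ)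
    (hA : ∀ i j : Fin M, A i j = g (((i : ℕ) : ℤ) - ((j : ℕ) : ℤ))) :
    J0 M v * A * (J0 M v)ᴴ + J1 M v * A * (J1 M v)ᴴ = A.hadamard (Ups M v) := by
  ext i j
  rw [J0_eq_toMatrix_shiftPEquiv hv.le, J1_eq_toMatrix_shiftPEquiv, Matrix.add_apply,
    Fin.toMatrix_shiftPEquiv_mul_mul_conjTranspose_apply_of_toeplitz hA,
    Fin.toMatrix_shiftPEquiv_mul_mul_conjTranspose_apply_of_toeplitz hA, hadamard_apply, Ups,
    of_apply]
  simp only [Fin.shiftPEquiv_sub_isSome_iff hv.le, Fin.shiftPEquiv_neg_isSome_iff]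
  by_cases hi : (i : ℕ) < v <;> by_cases hj : (j : ℕ) < v <;> simp [hi, hj]

theorem stmt2 (M : ℕ) (hM : 0 < M) (v : ℕ) (hv : v < M)
    (A : Matrix (Fin M) (Fin M) ℂ) (g : ℤ → ℂ)
    (hA : ∀ i j : Fin M, A i j = g (((i : ℕ) : ℤ) - ((j : ℕ) : ℤ))) :
    J0 M v * A * (J0 M v)ᴴ + J1 M v * A * (J1 M v)ᴴ = A.hadamard (Ups M v) :=
  stmt2_general M v hv A g hA
end

section
/- Let N ≥ 1, L_p ≥ 0, M = N + L_p, P_I ≥ 1 be integers, let 0 ≤ c < N, let p be an integer, and let 0 ≤ v < M. With Ψ_{p,c} := Λ(p)·f_c f_c^H·Λ(p)^H, it holds that J⁰(v)·Ψ_{p,c}·(J⁰(v))^H + J¹(v)·Ψ_{p,c}·(J¹(v))^H = Ψ_{p,c} ⊙ Υ(v), where ⊙ is the entrywise (Hadamard) product. -/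
open Matrix

/-- The OFDM subcarrier vector `f_c ∈ ℂ^{N+Lp}` with entries
`f_c(m) = N^{-1/2} exp(2πi c (m - Lp) / N)`. -/
noncomputable def fc (N Lp c : ℕ) : Fin (N + Lp) → ℂ := fun m =>
  (1 / Real.sqrt N : ℝ) *
    Complex.exp (2 * (Real.pi : ℂ) * Complex.I * (c : ℂ) *
      (((((m : ℕ) : ℤ) - (Lp : ℤ)) : ℤ) : ℂ) / (N : ℂ))

/-- The diagonal Doppler matrix `Λ(p)` with `m`-th diagonal entry `exp(2πi p m / (P_I N))`. -/
noncomputable def Lam (N Lp PI : ℕ) (p : ℤ) : Matrix (Fin (N + Lp)) (Fin (N + Lp)) ℂ :=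
  Matrix.diagonal fun m =>
    Complex.exp (2 * (Real.pi : ℂ) * Complex.I * (p : ℂ) * ((m : ℕ) : ℂ) / ((PI : ℂ) * (N : ℂ)))

/-- The matrix `Ψ_{p,c} = Λ(p) · f_c f_cᴴ · Λ(p)ᴴ`. -/
noncomputable def PsiPC (N Lp PI : ℕ) (p : ℤ) (c : ℕ) :
    Matrix (Fin (N + Lp)) (Fin (N + Lp)) ℂ :=
  Lam N Lp PI p * vecMulVec (fc N Lp c) (star (fc N Lp c)) * (Lam N Lp PI p)ᴴ

/-!
The entries of `Ψ_{p,c} = Λ(p) f_c f_cᴴ Λ(p)ᴴ` are `N⁻¹ exp(2πi (p/(P_I N) + c/N) (a - b))`, so `Ψ_{p,c}`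
is a Toeplitz matrix. For `i < v` row `i` of `J⁰(v)` is the unit vector at `M - v + i` and row `i`
of `J¹(v)` vanishes; for `i ≥ v` row `i` of `J¹(v)` is the unit vector at `i - v` and row `i` of
`J⁰(v)` vanishes. Hence `J⁰ Ψ J⁰ᴴ + J¹ Ψ J¹ᴴ` moves the `(i, j)` entry of `Ψ` along its diagonal when
`i` and `j` lie on the same side of `v`, and is zero otherwise, which is `Ψ ⊙ Υ(v)`.
-/

namespace Matrix

def IsToeplitz {n : ℕ} {α : Type*} (A : Matrix (Fin n) (Fin n) α) : Prop :=
  ∀ a b a' b' : Fin n, (a : ℤ) - b = (a' : ℤ) - b' → A a b = A a' b'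

variable {l m n o R : Type*} [Fintype m] [Fintype n] [NonAssocSemiring R] [StarRing R]

lemma mul_mul_conjTranspose_apply_of_eq_single [DecidableEq m] [DecidableEq n]
    {J : Matrix l m R} {A : Matrix m n R} {K : Matrix o n R} {i : l} {j : o} {k : m} {k' : n}
    (hi : J i = Pi.single k 1) (hj : K j = Pi.single k' 1) :
    (J * A * Kᴴ) i j = A k k' := by
  simp [mul_apply, conjTranspose_apply, hi, hj, Pi.single_apply, apply_ite star]

lemma mul_mul_conjTranspose_apply_of_eq_zero_left {J : Matrix l m R} {A : Matrix m n R}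
    {K : Matrix o n R} {i : l} (j : o) (hi : J i = 0) : (J * A * Kᴴ) i j = 0 := by
  simp [mul_apply, hi]

lemma mul_mul_conjTranspose_apply_of_eq_zero_right {J : Matrix l m R} {A : Matrix m n R}
    {K : Matrix o n R} (i : l) {j : o} (hj : K j = 0) : (J * A * Kᴴ) i j = 0 := by
  simp [mul_apply, conjTranspose_apply, hj]

end Matrix

section Shift

variable {M v : ℕ} (i : Fin M)

lemma J0_row_of_lt (hi : (i : ℕ) < v) : J0 M v i = Pi.single ⟨M - v + i, by omega⟩ 1 := by
  ext j
  simp [J0, Pi.single_apply, hi, Fin.ext_iff]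

lemma J0_row_of_le (hi : v ≤ (i : ℕ)) : J0 M v i = 0 := by
  ext j
  simp [J0, Nat.not_lt.mpr hi]

lemma J1_row_of_le (hi : v ≤ (i : ℕ)) : J1 M v i = Pi.single ⟨i - v, by omega⟩ 1 := by
  ext j
  simp [J1, Pi.single_apply, hi, Fin.ext_iff]

lemma J1_row_of_lt (hi : (i : ℕ) < v) : J1 M v i = 0 := by
  ext j
  simp [J1, Nat.not_le.mpr hi]

end Shift

lemma PsiPC_apply (N Lp PI : ℕ) (p : ℤ) (c : ℕ) (a b : Fin (N + Lp)) :
    PsiPC N Lp PI p c a b = 1 / N *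
      Complex.exp (2 * Real.pi * Complex.I * (p / (PI * N) + c / N) * (((a : ℤ) - b : ℤ) : ℂ)) := by
  simp only [PsiPC, Lam, diagonal_conjTranspose, mul_diagonal, diagonal_mul, vecMulVec_apply, fc,
    Pi.star_apply, star_mul', Complex.star_def, ← Complex.exp_conj, map_div₀, map_mul,
    Complex.conj_I, Complex.conj_ofReal, map_ofNat, map_natCast, map_intCast]
  have hs : (((1 / Real.sqrt N : ℝ)) : ℂ) ^ 2 = 1 / N := by
    rw [← Complex.ofReal_pow, div_pow, Real.sq_sqrt (Nat.cast_nonneg N)]; push_cast; ring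
  have exp_regroup : ∀ s x y z w : ℂ, Complex.exp x * (s * Complex.exp y * (s * Complex.exp z)) *
      Complex.exp w = s ^ 2 * Complex.exp (x + y + z + w) := by
    intro s x y z w
    simp only [Complex.exp_add]
    ring
  rw [exp_regroup, hs]
  push_cast
  ring_nf

lemma PsiPC_isToeplitz (N Lp PI : ℕ) (p : ℤ) (c : ℕ) : (PsiPC N Lp PI p c).IsToeplitz := by
  intro a b a' b' h
  rw [PsiPC_apply, PsiPC_apply, h]

theorem Matrix.IsToeplitz.J0_mul_mul_conjTranspose_add_J1_mul_mul_conjTranspose {M : ℕ}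
    {A : Matrix (Fin M) (Fin M) ℂ} (hA : A.IsToeplitz) (v : ℕ) :
    J0 M v * A * (J0 M v)ᴴ + J1 M v * A * (J1 M v)ᴴ = A.hadamard (Ups M v) := by
  ext i j
  rw [Matrix.add_apply, hadamard_apply]
  rcases lt_or_ge (i : ℕ) v with hi | hi <;> rcases lt_or_ge (j : ℕ) v with hj | hj
  · rw [mul_mul_conjTranspose_apply_of_eq_single (J0_row_of_lt i hi) (J0_row_of_lt j hj),
      mul_mul_conjTranspose_apply_of_eq_zero_left _ (J1_row_of_lt i hi), add_zero]
    rw [show Ups M v i j = 1 by simp [Ups, hi, hj], mul_one]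
    exact hA _ _ _ _ (by push_cast; omega)
  · rw [mul_mul_conjTranspose_apply_of_eq_zero_right _ (J0_row_of_le j hj),
      mul_mul_conjTranspose_apply_of_eq_zero_left _ (J1_row_of_lt i hi), add_zero]
    simp [Ups, hi, hj]
  · rw [mul_mul_conjTranspose_apply_of_eq_zero_left _ (J0_row_of_le i hi),
      mul_mul_conjTranspose_apply_of_eq_zero_right _ (J1_row_of_lt j hj), add_zero]
    simp [Ups, hi, hj]
  · rw [mul_mul_conjTranspose_apply_of_eq_zero_left _ (J0_row_of_le i hi),
      mul_mul_conjTranspose_apply_of_eq_single (J1_row_of_le i hi) (J1_row_of_le j hj), zero_add]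
    rw [show Ups M v i j = 1 by simp [Ups, hi, hj], mul_one]
    exact hA _ _ _ _ (by push_cast; omega)

theorem stmt4_general (N Lp PI : ℕ) (c : ℕ) (p : ℤ) (v : ℕ) :
    J0 (N + Lp) v * PsiPC N Lp PI p c * (J0 (N + Lp) v)ᴴ +
      J1 (N + Lp) v * PsiPC N Lp PI p c * (J1 (N + Lp) v)ᴴ =
    (PsiPC N Lp PI p c).hadamard (Ups (N + Lp) v) :=
  (PsiPC_isToeplitz N Lp PI p c).J0_mul_mul_conjTranspose_add_J1_mul_mul_conjTranspose v

theorem stmt4 (N Lp PI : ℕ) (hN : 0 < N) (hPI : 0 < PI) (c : ℕ) (hc : c < N) (p : ℤ)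
    (v : ℕ) (hv : v < N + Lp) :
    J0 (N + Lp) v * PsiPC N Lp PI p c * (J0 (N + Lp) v)ᴴ +
      J1 (N + Lp) v * PsiPC N Lp PI p c * (J1 (N + Lp) v)ᴴ =
    (PsiPC N Lp PI p c).hadamard (Ups (N + Lp) v) :=
  stmt4_general N Lp PI c p v
end
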